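/- In U_q(sl(2,ℂ)), for every n ∈ ℕ there exist Laurent polynomials c_0,…,c_{n-1} in K, K^{-1} (with coefficients in ℂ) such that E^nF^n = (EF)^n + Σ_{i=0}^{n-1} (EF)^i c_i(K, K^{-1}). -/

import Mathlib

/-!
Common setup: the quantized universal enveloping algebra `U_q(sl(2,ℂ))`, defined as the
unital associative ℂ-algebra with generators `E, F, K, K⁻¹` and the relations
`K K⁻¹ = 1 = K⁻¹ K`, `K E K⁻¹ = q² E`, `K F K⁻¹ = q⁻² F`,
`E F − F E = (K − K⁻¹)/(q − q⁻¹)`.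
-/

noncomputable section

inductive QGen : Type
  | E | F | K | Kinv
  deriving DecidableEq

open FreeAlgebra in
inductive QRel (q : ℂ) : FreeAlgebra ℂ QGen → FreeAlgebra ℂ QGen → Prop
  | KKinv : QRel q (ι ℂ QGen.K * ι ℂ QGen.Kinv) 1
  | KinvK : QRel q (ι ℂ QGen.Kinv * ι ℂ QGen.K) 1
  | KE : QRel q (ι ℂ QGen.K * ι ℂ QGen.E) (q ^ 2 • (ι ℂ QGen.E * ι ℂ QGen.K))
  | KF : QRel q (ι ℂ QGen.K * ι ℂ QGen.F) ((q ^ 2)⁻¹ • (ι ℂ QGen.F * ι ℂ QGen.K))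
  | EF : QRel q (ι ℂ QGen.E * ι ℂ QGen.F - ι ℂ QGen.F * ι ℂ QGen.E)
      ((q - q⁻¹)⁻¹ • (ι ℂ QGen.K - ι ℂ QGen.Kinv))

/-- `U_q(sl(2,ℂ))`. -/
abbrev Uq (q : ℂ) : Type := RingQuot (QRel q)

/-- The generator `E`. -/
def Eg (q : ℂ) : Uq q := RingQuot.mkAlgHom ℂ (QRel q) (FreeAlgebra.ι ℂ QGen.E)

/-- The generator `F`. -/
def Fg (q : ℂ) : Uq q := RingQuot.mkAlgHom ℂ (QRel q) (FreeAlgebra.ι ℂ QGen.F)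

/-- The generator `K`. -/
def Kg (q : ℂ) : Uq q := RingQuot.mkAlgHom ℂ (QRel q) (FreeAlgebra.ι ℂ QGen.K)

/-- The generator `K⁻¹`. -/
def Kinvg (q : ℂ) : Uq q := RingQuot.mkAlgHom ℂ (QRel q) (FreeAlgebra.ι ℂ QGen.Kinv)

/-- `K^l` for an integer `l`. -/
def Kz (q : ℂ) (l : ℤ) : Uq q :=
  if 0 ≤ l then Kg q ^ l.toNat else Kinvg q ^ (-l).toNat

/-- `U_0`, the centralizer of `K` in `U_q(sl(2,ℂ))`. -/
def U0c (q : ℂ) : Subalgebra ℂ (Uq q) := Subalgebra.centralizer ℂ {Kg q}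

end

/-!
Write `x = EF`. Since `K E = q² E K` and `K F = q⁻² F K`, the element `x` commutes with every
Laurent polynomial `c(K)`, while `c(K) F = F c(q⁻²K)`; and `EF - FE = (K - K⁻¹)/(q - q⁻¹)` gives
`E x = (x + g(K)) E` with `g(K) = (q⁻²K - q²K⁻¹)/(q - q⁻¹)`. Hence if `EⁿFⁿ = p(x)` for a monic
polynomial `p` of degree `n` with coefficients in `ℂ[K, K⁻¹]`, then
`Eⁿ⁺¹Fⁿ⁺¹ = E p(x) F = p^σ(x + g(K)) x`, where `σ` rescales `K` to `q⁻²K` in the coefficients;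
this is again monic, of degree `n + 1`.
-/

namespace AddMonoidAlgebra

variable {k G : Type*} [CommSemiring k] [AddCommMonoid G]

noncomputable def twist (χ : Multiplicative G →* k) :
    AddMonoidAlgebra k G →ₐ[k] AddMonoidAlgebra k G :=
  lift k (AddMonoidAlgebra k G) G
    ((algebraMap k (AddMonoidAlgebra k G) : k →* AddMonoidAlgebra k G).comp χ * of k G)

theorem twist_single (χ : Multiplicative G →* k) (g : G) (a : k) :
    twist χ (single g a) = single g (a * χ (.ofAdd g)) := by
  simp [twist, lift_single, MonoidHom.mul_apply, of_apply, Algebra.smul_def,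
    single_mul_single]

end AddMonoidAlgebra

theorem Units.zpow_mul_eq_smul_of_mul_eq_smul {k S : Type*} [Field k] [Semiring S] [Algebra k S]
    (u : Sˣ) {f : S} {c : k} (hc : c ≠ 0) (h : ↑u * f = c • (f * ↑u)) (l : ℤ) :
    ↑(u ^ l) * f = c ^ l • (f * ↑(u ^ l)) := by
  have h_inv : ↑u⁻¹ * f = c⁻¹ • (f * ↑u⁻¹) := by
    calc ↑u⁻¹ * f = c⁻¹ • (↑u⁻¹ * (c • (f * ↑u)) * ↑u⁻¹) := by
          rw [mul_smul_comm, smul_mul_assoc, inv_smul_smul₀ hc]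
          simp [mul_assoc]
      _ = c⁻¹ • (f * ↑u⁻¹) := by
          rw [← h, ← mul_assoc, Units.inv_mul, one_mul]
  induction l using Int.induction_on with
  | zero => simp
  | succ l ih =>
      rw [zpow_add_one, Units.val_mul, mul_assoc, h, mul_smul_comm, ← mul_assoc, ih,
        smul_mul_assoc, smul_smul, zpow_add_one₀ hc, mul_comm c, mul_assoc]
  | pred l ih =>
      rw [zpow_sub_one, Units.val_mul, mul_assoc, h_inv, mul_smul_comm, ← mul_assoc, ih,
        smul_mul_assoc, smul_smul, zpow_sub_one₀ hc, mul_comm c⁻¹, mul_assoc]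

namespace Polynomial

variable {A R : Type*} [CommSemiring A] [Semiring R] {φ : A →+* R} {σ : A →+* A} {g : A}
  {e f x : R}

theorem Monic.eval₂_eq_pow_add_sum {p : A[X]} (hp : p.Monic) (hx : ∀ a, Commute (φ a) x) :
    p.eval₂ φ x = x ^ p.natDegree + ∑ i : Fin p.natDegree, x ^ (i : ℕ) * φ (p.coeff i) := by
  conv_lhs => rw [hp.as_sum]
  simp only [eval₂_add, eval₂_X_pow, eval₂_finsetSum, C_mul_X_pow_eq_monomial, eval₂_monomial]
  rw [Fin.sum_univ_eq_sum_range (fun i => x ^ i * φ (p.coeff i))]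
  exact congrArg _ (Finset.sum_congr rfl fun i _ => ((hx _).pow_right i).eq)

theorem mul_eval₂_mul_eq_eval₂_comp_mul_X (hx : ∀ a, Commute (φ a) (e * f))
    (he : e * (e * f) = (e * f + φ g) * e) (hf : ∀ a, φ a * f = f * φ (σ a)) (p : A[X]) :
    e * p.eval₂ φ (e * f) * f = ((p.map σ).comp (X + C g) * X).eval₂ φ (e * f) := by
  let Ψ := eval₂RingHom' φ (e * f) hx
  have hΨX : Ψ X = e * f := eval₂_X _ _
  have hΨC (b : A) : Ψ (C b) = φ b := eval₂_C _ _
  change e * Ψ p * f = Ψ ((p.map σ).comp (X + C g) * X)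
  induction p using Polynomial.induction_on' with
  | add p r hp hr =>
      simp only [map_add, mul_add, add_mul, Polynomial.map_add, add_comp, hp, hr]
  | monomial i a =>
      have hτ : ((monomial i a).map σ).comp (X + C g) * X = (X + C g) ^ i * X * C (σ a) := by
        rw [map_monomial, ← C_mul_X_pow_eq_monomial, mul_comp, C_comp, X_pow_comp]
        ring
      calc e * Ψ (monomial i a) * f = e * (e * f) ^ i * (φ a * f) := by
            rw [show Ψ (monomial i a) = φ a * (e * f) ^ i from eval₂_monomial _ _,
              ((hx a).pow_right i).eq]
            simp only [mul_assoc]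
        _ = e * (e * f) ^ i * f * φ (σ a) := by rw [hf, mul_assoc, mul_assoc, mul_assoc]
        _ = (e * f + φ g) ^ i * (e * f) * φ (σ a) := by
            rw [(SemiconjBy.pow_right he i).eq, mul_assoc _ e f]
        _ = Ψ (((monomial i a).map σ).comp (X + C g) * X) := by
            rw [hτ, map_mul, map_mul, map_pow, map_add, hΨX, hΨC, hΨC]

theorem exists_monic_pow_mul_pow_eq_eval₂ [Nontrivial A] (hx : ∀ a, Commute (φ a) (e * f))
    (he : e * (e * f) = (e * f + φ g) * e) (hf : ∀ a, φ a * f = f * φ (σ a)) (n : ℕ) :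
    ∃ p : A[X], p.Monic ∧ p.natDegree = n ∧ e ^ n * f ^ n = p.eval₂ φ (e * f) := by
  induction n with
  | zero => exact ⟨1, monic_one, natDegree_one, by simp⟩
  | succ n ih =>
      obtain ⟨p, hp, hdeg, hpow⟩ := ih
      have hcomp : ((p.map σ).comp (X + C g)).Monic := (hp.map σ).comp_X_add_C g
      refine ⟨(p.map σ).comp (X + C g) * X, hcomp.mul monic_X, ?_, ?_⟩
      · have hlead : (p.map σ).leadingCoeff * (X + C g).leadingCoeff ^ (p.map σ).natDegree ≠ 0 :=
          by simp [(hp.map σ).leadingCoeff, (monic_X_add_C g).leadingCoeff]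
        rw [hcomp.natDegree_mul monic_X, natDegree_X, natDegree_comp_eq_of_mul_ne_zero hlead,
          natDegree_X_add_C, mul_one, hp.natDegree_map, hdeg]
      · rw [← mul_eval₂_mul_eq_eval₂_comp_mul_X hx he hf, ← hpow, pow_succ', pow_succ]
        simp only [mul_assoc]

theorem exists_pow_mul_pow_eq_pow_add_sum [Nontrivial A] (hx : ∀ a, Commute (φ a) (e * f))
    (he : e * (e * f) = (e * f + φ g) * e) (hf : ∀ a, φ a * f = f * φ (σ a)) (n : ℕ) :
    ∃ c : Fin n → A, e ^ n * f ^ n = (e * f) ^ n + ∑ i : Fin n, (e * f) ^ (i : ℕ) * φ (c i) := by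
  obtain ⟨p, hp, rfl, hpow⟩ := exists_monic_pow_mul_pow_eq_eval₂ hx he hf n
  exact ⟨fun i => p.coeff i, hpow.trans (hp.eval₂_eq_pow_add_sum hx)⟩

end Polynomial

namespace Uq

open AddMonoidAlgebra

variable (q : ℂ)

theorem Kg_mul_Kinvg : Kg q * Kinvg q = 1 := by
  simpa [Kg, Kinvg] using RingQuot.mkAlgHom_rel ℂ (QRel.KKinv (q := q))

theorem Kinvg_mul_Kg : Kinvg q * Kg q = 1 := by
  simpa [Kg, Kinvg] using RingQuot.mkAlgHom_rel ℂ (QRel.KinvK (q := q))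

theorem Kg_mul_Eg : Kg q * Eg q = q ^ 2 • (Eg q * Kg q) := by
  simpa [Kg, Eg] using RingQuot.mkAlgHom_rel ℂ (QRel.KE (q := q))

theorem Kg_mul_Fg : Kg q * Fg q = (q ^ 2)⁻¹ • (Fg q * Kg q) := by
  simpa [Kg, Fg] using RingQuot.mkAlgHom_rel ℂ (QRel.KF (q := q))

theorem Eg_mul_Fg_sub_Fg_mul_Eg :
    Eg q * Fg q - Fg q * Eg q = (q - q⁻¹)⁻¹ • (Kg q - Kinvg q) := by
  simpa [Kg, Kinvg, Eg, Fg] using RingQuot.mkAlgHom_rel ℂ (QRel.EF (q := q))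

def Kunit : (Uq q)ˣ := ⟨Kg q, Kinvg q, Kg_mul_Kinvg q, Kinvg_mul_Kg q⟩

theorem Kz_eq_Kunit_zpow (l : ℤ) : Kz q l = ↑(Kunit q ^ l) := by
  unfold Kz
  split_ifs with hl
  · lift l to ℕ using hl
    rw [zpow_natCast, Units.val_pow_eq_pow_val, Int.toNat_natCast]
    rfl
  · obtain ⟨m, rfl⟩ := Int.exists_eq_neg_ofNat (le_of_not_ge hl)
    rw [zpow_neg, zpow_natCast, ← inv_pow, Units.val_pow_eq_pow_val, neg_neg, Int.toNat_natCast]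
    rfl

noncomputable def evalK : LaurentPolynomial ℂ →ₐ[ℂ] Uq q :=
  lift ℂ (Uq q) ℤ ((Units.coeHom (Uq q)).comp (zpowersHom (Uq q)ˣ (Kunit q)))

theorem evalK_single (l : ℤ) (a : ℂ) : evalK q (single l a) = a • ↑(Kunit q ^ l) :=
  lift_single _ _ _

theorem evalK_apply (c : LaurentPolynomial ℂ) :
    evalK q c = c.coeff.sum fun l a => a • Kz q l := by
  simp only [evalK, lift_apply, Kz_eq_Kunit_zpow]
  rfl

noncomputable def g : LaurentPolynomial ℂ :=
  single 1 ((q - q⁻¹)⁻¹ * (q ^ 2)⁻¹) - single (-1) ((q - q⁻¹)⁻¹ * q ^ 2)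

variable {q} (hq : q ≠ 0)
include hq

noncomputable def rescaleK : LaurentPolynomial ℂ →ₐ[ℂ] LaurentPolynomial ℂ :=
  twist ((Units.coeHom ℂ).comp (zpowersHom ℂˣ (Units.mk0 (q ^ 2) (pow_ne_zero 2 hq))⁻¹))

theorem Kunit_zpow_mul_Eg (l : ℤ) :
    ↑(Kunit q ^ l) * Eg q = (q ^ 2) ^ l • (Eg q * ↑(Kunit q ^ l)) :=
  (Kunit q).zpow_mul_eq_smul_of_mul_eq_smul (pow_ne_zero 2 hq) (Kg_mul_Eg q) l

theorem Kunit_zpow_mul_Fg (l : ℤ) :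
    ↑(Kunit q ^ l) * Fg q = (q ^ 2)⁻¹ ^ l • (Fg q * ↑(Kunit q ^ l)) :=
  (Kunit q).zpow_mul_eq_smul_of_mul_eq_smul (inv_ne_zero (pow_ne_zero 2 hq)) (Kg_mul_Fg q) l

theorem Eg_mul_Kunit_zpow (l : ℤ) :
    Eg q * ↑(Kunit q ^ l) = ((q ^ 2) ^ l)⁻¹ • (↑(Kunit q ^ l) * Eg q) := by
  rw [Kunit_zpow_mul_Eg hq, inv_smul_smul₀ (zpow_ne_zero l (pow_ne_zero 2 hq))]

theorem commute_Kunit_zpow_Eg_mul_Fg (l : ℤ) :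
    Commute (↑(Kunit q ^ l) : Uq q) (Eg q * Fg q) := by
  calc ↑(Kunit q ^ l) * (Eg q * Fg q)
      = ((q ^ 2) ^ l * (q ^ 2)⁻¹ ^ l) • (Eg q * Fg q * ↑(Kunit q ^ l)) := by
        rw [← mul_assoc, Kunit_zpow_mul_Eg hq, smul_mul_assoc, mul_assoc, Kunit_zpow_mul_Fg hq,
          mul_smul_comm, smul_smul, mul_assoc]
    _ = Eg q * Fg q * ↑(Kunit q ^ l) := by
        rw [inv_zpow', zpow_neg, mul_inv_cancel₀ (zpow_ne_zero l (pow_ne_zero 2 hq)), one_smul]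

theorem commute_evalK_Eg_mul_Fg (c : LaurentPolynomial ℂ) :
    Commute (evalK q c) (Eg q * Fg q) := by
  induction c using AddMonoidAlgebra.induction_linear with
  | zero => rw [map_zero]; exact Commute.zero_left _
  | add c d hc hd => rw [map_add]; exact hc.add_left hd
  | single l a => rw [evalK_single]; exact (commute_Kunit_zpow_Eg_mul_Fg hq l).smul_left a

theorem evalK_mul_Fg (c : LaurentPolynomial ℂ) :
    evalK q c * Fg q = Fg q * evalK q (rescaleK hq c) := by
  induction c using AddMonoidAlgebra.induction_linear with
  | zero => simp only [map_zero, zero_mul, mul_zero]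
  | add c d hc hd => rw [map_add, map_add, map_add, add_mul, mul_add, hc, hd]
  | single l a =>
      rw [rescaleK, twist_single, evalK_single, evalK_single, smul_mul_assoc, Kunit_zpow_mul_Fg hq,
        mul_smul_comm, smul_smul]
      simp

theorem Eg_mul_Eg_mul_Fg :
    Eg q * (Eg q * Fg q) = (Eg q * Fg q + evalK q (g q)) * Eg q := by
  have hK : Kg q = ↑(Kunit q ^ (1 : ℤ)) := by rw [zpow_one]; rfl
  have hKinv : Kinvg q = ↑(Kunit q ^ (-1 : ℤ)) := by rw [zpow_neg_one]; rfl
  have hEF : Eg q * Fg q = Fg q * Eg q + (q - q⁻¹)⁻¹ • (Kg q - Kinvg q) := by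
    rw [← Eg_mul_Fg_sub_Fg_mul_Eg]; abel
  calc Eg q * (Eg q * Fg q)
      = Eg q * Fg q * Eg q + (q - q⁻¹)⁻¹ • (Eg q * Kg q - Eg q * Kinvg q) := by
        conv_lhs => rw [hEF]
        rw [mul_add, mul_smul_comm, mul_sub, mul_assoc]
    _ = Eg q * Fg q * Eg q +
          (q - q⁻¹)⁻¹ • ((q ^ 2)⁻¹ • (Kg q * Eg q) - q ^ 2 • (Kinvg q * Eg q)) := by
        rw [hK, hKinv, Eg_mul_Kunit_zpow hq, Eg_mul_Kunit_zpow hq, zpow_one, zpow_neg_one,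
          inv_inv]
    _ = (Eg q * Fg q + evalK q (g q)) * Eg q := by
        rw [g, map_sub, evalK_single, evalK_single, ← hK, ← hKinv]
        simp only [add_mul, sub_mul, smul_mul_assoc, smul_sub, smul_smul]

end Uq

theorem stmt13_general (q : ℂ) (hq : q ≠ 0)
    (n : ℕ) :
    ∃ c : Fin n → (ℤ →₀ ℂ),
      Eg q ^ n * Fg q ^ n =
        (Eg q * Fg q) ^ n +
          ∑ i : Fin n, (Eg q * Fg q) ^ (i : ℕ) * ((c i).sum fun l a => a • Kz q l) := by
  obtain ⟨c, hc⟩ := Polynomial.exists_pow_mul_pow_eq_pow_add_sum (φ := (Uq.evalK q).toRingHom)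
    (Uq.commute_evalK_Eg_mul_Fg hq) (Uq.Eg_mul_Eg_mul_Fg hq) (Uq.evalK_mul_Fg hq) n
  refine ⟨fun i => (c i).coeff, ?_⟩
  simpa only [AlgHom.toRingHom_eq_coe, RingHom.coe_coe, Uq.evalK_apply] using hc

/-- For every `n ∈ ℕ` there are Laurent polynomials `c₀, …, c_{n-1}` in
`K, K⁻¹` (encoded as finitely supported functions `ℤ →₀ ℂ`, evaluated at `K` via
`c.sum fun l a => a • K^l`) such that `EⁿFⁿ = (EF)ⁿ + Σ_{i=0}^{n-1} (EF)ⁱ cᵢ(K, K⁻¹)`. -/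
theorem stmt13 (q : ℂ) (hq : q ≠ 0) (hroot : ∀ m : ℕ, 0 < m → q ^ m ≠ 1)
    (n : ℕ) (hn : 1 ≤ n) :
    ∃ c : Fin n → (ℤ →₀ ℂ),
      Eg q ^ n * Fg q ^ n =
        (Eg q * Fg q) ^ n +
          ∑ i : Fin n, (Eg q * Fg q) ^ (i : ℕ) * ((c i).sum fun l a => a • Kz q l) :=
  stmt13_general q hq n
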